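/- arXiv:2211.14665 — 2 statements merged into one kernel-verified Lean document; each statement's English description precedes it below -/
import Mathlib

section
/- Let T be a subgroup of K^× and 𝒟 ⊆ 𝒢_{K|T} a closed subspace. There exists a T-visible valuation v of K with Z_K(𝒟) = I_v ∩ 𝒢_{K|T} and 𝒟 = D_v ∩ 𝒢_{K|T} if and only if (1) Z_K(𝒟) ≠ 𝒟 and (2) C_K(Z_K(𝒟)) ∩ 𝒢_{K|T} = 𝒟. -/
/- Common definitions: Milnor K-theory of fields (possibly modulo a subgroup of `Kˣ`),
its rationalization, the dual space `𝒢_K` with the relation of alternating pairs,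
and valuation-theoretic subspaces, following the paper. -/

set_option synthInstance.maxHeartbeats 400000
set_option maxHeartbeats 1000000

open scoped TensorProduct

namespace Paper

section Milnor

variable (K : Type) [Field K]

/-- The Steinberg relation together with the relation killing a subgroup `T ≤ Kˣ`; used to
present `K^M_*(K|T) := K^M_*(K)/⟨T⟩` as a quotient of the tensor algebra of the
`ℤ`-module `Kˣ`. -/
inductive MilnorRel (T : Subgroup Kˣ) :
    TensorAlgebra ℤ (Additive Kˣ) → TensorAlgebra ℤ (Additive Kˣ) → Prop
  | steinberg (x y : Kˣ) (h : (x : K) + (y : K) = 1) :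
      MilnorRel T (TensorAlgebra.ι ℤ (Additive.ofMul x) * TensorAlgebra.ι ℤ (Additive.ofMul y)) 0
  | subgroup (x : Kˣ) (h : x ∈ T) :
      MilnorRel T (TensorAlgebra.ι ℤ (Additive.ofMul x)) 0

/-- The Milnor K-theory ring modulo a subgroup: `K^M_*(K|T)`.  For `T = ⊥` this is
Milnor K-theory `K^M_*(K)` itself. -/
abbrev MilnorK (T : Subgroup Kˣ) := RingQuot (MilnorRel K T)

/-- The canonical quotient map from the tensor algebra. -/
noncomputable def milnorMk (T : Subgroup Kˣ) :
    TensorAlgebra ℤ (Additive Kˣ) →+* MilnorK K T :=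
  RingQuot.mkRingHom (MilnorRel K T)

/-- The symbol `{x}` in degree one of `K^M_*(K|T)`. -/
noncomputable def symbol (T : Subgroup Kˣ) (x : Kˣ) : MilnorK K T :=
  milnorMk K T (TensorAlgebra.ι ℤ (Additive.ofMul x))

/-- The degree `n` part of `K^M_*(K|T)`, i.e. the image of the degree `n` part of the
tensor algebra. -/
noncomputable def milnorDeg (T : Subgroup Kˣ) (n : ℕ) : AddSubgroup (MilnorK K T) :=
  AddSubgroup.map (milnorMk K T).toAddMonoidHom
    (Submodule.toAddSubgroup
      ((LinearMap.range (TensorAlgebra.ι ℤ (M := Additive Kˣ))) ^ n))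

/-- A ring isomorphism between Milnor K-rings is graded if it maps each degree onto the
corresponding degree. -/
def IsGradedMilnorIso {K L : Type} [Field K] [Field L] {T : Subgroup Kˣ} {S : Subgroup Lˣ}
    (φ : MilnorK K T ≃+* MilnorK L S) : Prop :=
  ∀ n : ℕ, AddSubgroup.map φ.toRingHom.toAddMonoidHom (milnorDeg K T n) = milnorDeg L S n

/-- `𝒦_*(K|T) := ℚ ⊗_ℤ K^M_*(K|T)`. -/
abbrev MilnorKQ (T : Subgroup Kˣ) := ℚ ⊗[ℤ] MilnorK K T

/-- The symbol `{x}` in degree one of `𝒦_*(K|T)`. -/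
noncomputable def symbolQ (T : Subgroup Kˣ) (x : Kˣ) : MilnorKQ K T :=
  1 ⊗ₜ symbol K T x

/-- The degree `n` part of `𝒦_*(K|T)`. -/
noncomputable def milnorDegQ (T : Subgroup Kˣ) (n : ℕ) : Submodule ℚ (MilnorKQ K T) :=
  Submodule.span ℚ
    ((fun a => (1 : ℚ) ⊗ₜ a) ''
      ((milnorMk K T) ''
        ((LinearMap.range (TensorAlgebra.ι ℤ (M := Additive Kˣ))) ^ n : Submodule ℤ _)))

/-- An isomorphism of the graded `ℚ`-algebras `𝒦_*(K|T)` is graded if it maps each degree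
onto the corresponding degree. -/
def IsGradedIsoQ {K L : Type} [Field K] [Field L] {T : Subgroup Kˣ} {S : Subgroup Lˣ}
    (φ : MilnorKQ K T ≃ₐ[ℚ] MilnorKQ L S) : Prop :=
  ∀ n : ℕ, Submodule.map φ.toLinearMap (milnorDegQ K T n) = milnorDegQ L S n

variable {K}

/-- The ring homomorphism `K^M_*(K|T) → K^M_*(L|S)` induced by a field embedding `σ`
with `σ(T) ⊆ S`. -/
noncomputable def milnorMap {L : Type} [Field L] (σ : K →+* L)
    (T : Subgroup Kˣ) (S : Subgroup Lˣ)
    (h : ∀ x : Kˣ, x ∈ T → Units.map (σ : K →* L) x ∈ S) :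
    MilnorK K T →+* MilnorK L S :=
  RingQuot.lift
    ⟨(TensorAlgebra.lift ℤ
        (((milnorMk L S).toAddMonoidHom.comp
          ((TensorAlgebra.ι ℤ (M := Additive Lˣ)).toAddMonoidHom.comp
            (MonoidHom.toAdditive (Units.map (σ : K →* L))))).toIntLinearMap)).toRingHom,
     by
      rintro a b (⟨x, y, hxy⟩ | ⟨x, hx⟩)
      · simp only [AlgHom.toRingHom_eq_coe, RingHom.coe_coe, map_mul, map_zero,
          TensorAlgebra.lift_ι_apply]
        show milnorMk L S (TensorAlgebra.ι ℤ (Additive.ofMul (Units.map (σ : K →* L) x))) *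
          milnorMk L S (TensorAlgebra.ι ℤ (Additive.ofMul (Units.map (σ : K →* L) y))) = 0
        rw [← map_mul]
        have hsum : ((Units.map (σ : K →* L) x : Lˣ) : L) +
            ((Units.map (σ : K →* L) y : Lˣ) : L) = 1 := by
          simpa using congrArg σ hxy
        exact (RingQuot.mkRingHom_rel
          (MilnorRel.steinberg (T := S) _ _ hsum)).trans (map_zero _)
      · simp only [AlgHom.toRingHom_eq_coe, RingHom.coe_coe, map_zero,
          TensorAlgebra.lift_ι_apply]
        show milnorMk L S (TensorAlgebra.ι ℤ (Additive.ofMul (Units.map (σ : K →* L) x))) = 0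
        exact (RingQuot.mkRingHom_rel
          (MilnorRel.subgroup (T := S) _ (h x hx))).trans (map_zero _)⟩

/-- The induced ring homomorphism `𝒦_*(K|T) → 𝒦_*(L|S)`. -/
noncomputable def milnorMapQ {L : Type} [Field L] (σ : K →+* L)
    (T : Subgroup Kˣ) (S : Subgroup Lˣ)
    (h : ∀ x : Kˣ, x ∈ T → Units.map (σ : K →* L) x ∈ S) :
    MilnorKQ K T →+* MilnorKQ L S :=
  (Algebra.TensorProduct.map (AlgHom.id ℤ ℚ) (milnorMap σ T S h).toIntAlgHom).toRingHom

end Milnor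

section Dual

variable (K : Type) [Field K]

/-- `𝒢_K := Hom_ℤ(Kˣ, ℚ)`. -/
abbrev GK := Additive Kˣ →ₗ[ℤ] ℚ

/-- The weak topology on `𝒢_K`: the topology of pointwise convergence, `ℚ` being discrete. -/
noncomputable def gkTopology : TopologicalSpace (GK K) :=
  TopologicalSpace.induced (fun (f : GK K) (x : Additive Kˣ) => f x)
    (@Pi.topologicalSpace _ _ (fun _ => ⊥))

/-- A subspace of `𝒢_K` is closed if it is closed in the weak topology. -/
def IsClosedSubspace (H : Submodule ℚ (GK K)) : Prop :=
  @IsClosed _ (gkTopology K) (H : Set (GK K))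

variable {K}

/-- `f, g ∈ 𝒢_K` form an alternating pair: `ℛ_K(f,g)`. -/
def AltPair (f g : GK K) : Prop :=
  ∀ x y : Kˣ, (x : K) + (y : K) = 1 →
    f (Additive.ofMul x) * g (Additive.ofMul y) = f (Additive.ofMul y) * g (Additive.ofMul x)

variable (K)

/-- `𝒢_{K|T}`: the functionals vanishing on `T`. -/
def GKrel (T : Subgroup Kˣ) : Submodule ℚ (GK K) where
  carrier := {f | ∀ x ∈ T, f (Additive.ofMul x) = 0}
  add_mem' := by intro f g hf hg x hx; simp [hf x hx, hg x hx]
  zero_mem' := by intro x hx; simp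
  smul_mem' := by intro c f hf x hx; simp [hf x hx]

/-- The `ℛ_K`-centralizer `C_K(𝒟)` of a subspace `𝒟 ⊆ 𝒢_K`. -/
def RCentralizer (D : Submodule ℚ (GK K)) : Submodule ℚ (GK K) where
  carrier := {f | ∀ g ∈ D, AltPair f g}
  add_mem' := by
    intro f1 f2 h1 h2 g hg x y hxy
    have e1 := h1 g hg x y hxy
    have e2 := h2 g hg x y hxy
    simp only [LinearMap.add_apply]
    rw [add_mul, add_mul, e1, e2]
  zero_mem' := by intro g hg x y hxy; simp
  smul_mem' := by
    intro c f hf g hg x y hxy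
    simp only [LinearMap.smul_apply, smul_eq_mul]
    rw [mul_assoc, mul_assoc, hf g hg x y hxy]

/-- The `ℛ_K`-centre `Z_K(𝒟)` of a subspace `𝒟 ⊆ 𝒢_K`. -/
def RCentre (D : Submodule ℚ (GK K)) : Submodule ℚ (GK K) :=
  D ⊓ RCentralizer K D

/-- The orthogonal subgroup `ℋ^⊥ ⊆ Kˣ` of a subspace `ℋ ⊆ 𝒢_K`. -/
def perpSubgroup (H : Submodule ℚ (GK K)) : Subgroup Kˣ where
  carrier := {x | ∀ f ∈ H, f (Additive.ofMul x) = 0}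
  one_mem' := by
    intro f hf
    show f (Additive.ofMul 1) = 0
    rw [ofMul_one, map_zero]
  mul_mem' := by
    intro x y hx hy f hf
    have : Additive.ofMul (x * y) = Additive.ofMul x + Additive.ofMul y := rfl
    rw [this, map_add, hx f hf, hy f hf, add_zero]
  inv_mem' := by
    intro x hx f hf
    have : Additive.ofMul x⁻¹ = -Additive.ofMul x := rfl
    rw [this, map_neg, hx f hf, neg_zero]

/-- `I_v := 𝒢_{K|U_v}` for a valuation (given by its valuation subring `A`). -/
noncomputable def Ival (A : ValuationSubring K) : Submodule ℚ (GK K) := GKrel K A.unitGroup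

/-- `D_v := 𝒢_{K|U_v^1}` for a valuation (given by its valuation subring `A`). -/
def Dval (A : ValuationSubring K) : Submodule ℚ (GK K) := GKrel K A.principalUnitGroup

/-- `A` is the valuation ring of the minimal valuation `v_ℐ` attached to a valuative
subspace `ℐ`: one has `ℐ ⊆ I_v`, and `v` is minimal with this property.  Valuations are
ordered by coarsening (`v ≤ w` iff `v` is a coarsening of `w`, i.e. `𝒪_w ⊆ 𝒪_v`), so
minimality of the valuation means maximality of the valuation subring. -/
def IsMinValuationFor (A : ValuationSubring K) (I : Submodule ℚ (GK K)) : Prop :=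
  I ≤ Ival K A ∧ ∀ B : ValuationSubring K, I ≤ Ival K B → B ≤ A

/-- The subgroup of `Kˣ` consisting of the units of a subfield `k ⊆ K`. -/
def subfieldUnits (k : Subfield K) : Subgroup Kˣ where
  carrier := {x | (x : K) ∈ k}
  one_mem' := k.one_mem
  mul_mem' := by intro a b ha hb; exact k.mul_mem ha hb
  inv_mem' := by
    intro a ha
    show ((a⁻¹ : Kˣ) : K) ∈ k
    rw [Units.val_inv_eq_inv_val]
    exact k.inv_mem ha

/-- The valuation `v` (given by its valuation subring `A`) is `T`-visible:
`I_v ∩ 𝒢_{K|T} = Z_K(D_v ∩ 𝒢_{K|T}) ≠ D_v ∩ 𝒢_{K|T}`, and `v = v_ℐ` for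
`ℐ = I_v ∩ 𝒢_{K|T}`. -/
def IsVisible (T : Subgroup Kˣ) (A : ValuationSubring K) : Prop :=
  Ival K A ⊓ GKrel K T = RCentre K (Dval K A ⊓ GKrel K T) ∧
  Ival K A ⊓ GKrel K T ≠ Dval K A ⊓ GKrel K T ∧
  IsMinValuationFor K A (Ival K A ⊓ GKrel K T)

/-- A subgroup of the value group `vK = Kˣ/U_v` of the valuation corresponding to `A` is
represented by a subgroup `H` of `Kˣ` containing `U_v = A.unitGroup`; `H/U_v` is convex in
`vK` iff whenever `x ∈ H` and `0 ≤ v(y) ≤ v(x)`, also `y ∈ H`. -/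
def IsConvexInValueGroup (A : ValuationSubring K) (H : Subgroup Kˣ) : Prop :=
  A.unitGroup ≤ H ∧
    ∀ x y : Kˣ, x ∈ H → (y : K) ∈ A → ((x : K) * (y : K)⁻¹) ∈ A → y ∈ H

/-- The residue field `kv` of the restriction of the valuation to a subfield `k ⊆ K`,
as a subfield of the residue field `Kv`; it is the set of residues of elements
of `k ∩ 𝒪_v` (which is already closed under the field operations). -/
noncomputable def residueSubfield (A : ValuationSubring K) (k : Subfield K) :
    Subfield (IsLocalRing.ResidueField A) :=
  Subfield.closure ((IsLocalRing.residue A) '' {a : A | (a : K) ∈ k})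

end Dual

section KQ

variable (K : Type) [Field K]

/-- A subgroup `T ≤ Kˣ` viewed as a `ℤ`-submodule of `Additive Kˣ`. -/
def subgroupToSubmodule (T : Subgroup Kˣ) : Submodule ℤ (Additive Kˣ) :=
  AddSubgroup.toIntSubmodule (Subgroup.toAddSubgroup T)

/-- `𝒦_{K|T} := ℚ ⊗_ℤ (Kˣ/T) = 𝒦_1(K|T)`. -/
abbrev KQ (T : Subgroup Kˣ) := ℚ ⊗[ℤ] (Additive Kˣ ⧸ subgroupToSubmodule K T)

/-- The class of `x ∈ Kˣ` in `𝒦_{K|T}`; this is the canonical map `Kˣ → 𝒦_{K|T}`. -/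
noncomputable def symbQ (T : Subgroup Kˣ) (x : Kˣ) : KQ K T :=
  (1 : ℚ) ⊗ₜ Submodule.Quotient.mk (Additive.ofMul x)

/-- The map `Kˣ → 𝒦_1(K|T)`, `x ↦ {x}`, as a `ℤ`-linear map on `Additive Kˣ`. -/
noncomputable def symbolQLinear (T : Subgroup Kˣ) : Additive Kˣ →ₗ[ℤ] MilnorKQ K T :=
  ((Algebra.TensorProduct.includeRight :
      MilnorK K T →ₐ[ℤ] MilnorKQ K T).toLinearMap.toAddMonoidHom.comp
    ((milnorMk K T).toAddMonoidHom.comp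
      (TensorAlgebra.ι ℤ (M := Additive Kˣ)).toAddMonoidHom)).toIntLinearMap

/-- The canonical identification map `𝒦_{K|T} = 𝒦_1(K|T) → 𝒦_*(K|T)` onto degree one. -/
noncomputable def KQtoMilnor (T : Subgroup Kˣ) : KQ K T →ₗ[ℚ] MilnorKQ K T :=
  LinearMap.liftBaseChange ℚ <|
    Submodule.liftQ (subgroupToSubmodule K T) (symbolQLinear K T)
      (by
        intro x hx
        have h2 := RingQuot.mkRingHom_rel (MilnorRel.subgroup (T := T) (Additive.toMul x) hx)
        simp only [LinearMap.mem_ker]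
        show (Algebra.TensorProduct.includeRight : MilnorK K T →ₐ[ℤ] MilnorKQ K T)
          (milnorMk K T (TensorAlgebra.ι ℤ x)) = 0
        rw [show milnorMk K T (TensorAlgebra.ι ℤ x) = 0 from h2.trans (map_zero _), map_zero])

/-- A subspace `ℋ ⊆ 𝒦_{K|T}` is Milnor-closed if for every nonzero `s ∈ ℋ` and every
`t ∈ 𝒦_{K|T}` with `{s,t} = 0` in `𝒦_2(K|T)`, one has `t ∈ ℋ`. -/
def MilnorClosed (T : Subgroup Kˣ) (H : Submodule ℚ (KQ K T)) : Prop :=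
  ∀ s ∈ H, s ≠ 0 → ∀ t : KQ K T, KQtoMilnor K T s * KQtoMilnor K T t = 0 → t ∈ H

/-- The projection `ℚ ⊗_ℤ Kˣ → 𝒦_{K|T}`. -/
noncomputable def KQproj (T : Subgroup Kˣ) : (ℚ ⊗[ℤ] Additive Kˣ) →ₗ[ℚ] KQ K T :=
  LinearMap.baseChange ℚ (subgroupToSubmodule K T).mkQ

lemma KQproj_surjective (T : Subgroup Kˣ) : Function.Surjective (KQproj K T) := by
  intro z
  induction z using TensorProduct.induction_on with
  | zero => exact ⟨0, map_zero _⟩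
  | tmul a b =>
      obtain ⟨u, hu⟩ := Submodule.Quotient.mk_surjective (subgroupToSubmodule K T) b
      exact ⟨a ⊗ₜ u, by rw [KQproj, LinearMap.baseChange_tmul, Submodule.mkQ_apply, hu]⟩
  | add x y hx hy =>
      obtain ⟨x', hx'⟩ := hx
      obtain ⟨y', hy'⟩ := hy
      exact ⟨x' + y', by rw [map_add, hx', hy']⟩

/-- The canonical pairing `𝒦_{K|T} × 𝒢_{K|T} → ℚ`.  It takes the correct value
`⟨s, f⟩` whenever `f` vanishes on `T` (in which case the value is independent of the
choice of preimage), and junk values otherwise. -/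
noncomputable def gpair (T : Subgroup Kˣ) (f : GK K) (s : KQ K T) : ℚ :=
  (LinearMap.liftBaseChange ℚ f) (Function.surjInv (KQproj_surjective K T) s)

/-- The image of `𝒦_{L|k}` in `𝒦_{K|k}`, i.e. the subspace spanned by the classes of the
elements of `Lˣ`. -/
noncomputable def subfieldSpan (k : Subfield K) (L : Subfield K) :
    Submodule ℚ (KQ K (subfieldUnits K k)) :=
  Submodule.span ℚ {s | ∃ x : Kˣ, (x : K) ∈ L ∧ s = symbQ K (subfieldUnits K k) x}

end KQ

section FieldTheory

variable (K : Type) [Field K]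

/-- `k` is relatively algebraically closed in `K`. -/
def IsRelAlgClosed (k : Subfield K) : Prop := ∀ x : K, IsAlgebraic k x → x ∈ k

/-- The relative algebraic closure of a subfield `M` in `K` (the set of elements of `K`
algebraic over `M`, which is already a subfield). -/
def relAlgClosure (M : Subfield K) : Subfield K :=
  Subfield.closure {x : K | IsAlgebraic M x}

/-- The transcendence degree `trdeg(L|k)` of an extension of subfields of `K`:
the supremum of the cardinalities of subsets of `L` that are algebraically independent
over `k`.  `trdeg K k ⊤` is `trdeg(K|k)`. -/
noncomputable def trdeg (k L : Subfield K) : Cardinal :=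
  ⨆ s : {s : Set K // s ⊆ (L : Set K) ∧ AlgebraicIndependent k ((↑) : s → K)},
    Cardinal.mk s.1

/-- The perfect closure `k^i` of a subfield `k ⊆ K` inside a perfect closure
`iK : K → Ki` of `K` (with respect to the characteristic exponent `p`): the set of
elements with a `p`-power in `iK(k)` (already a subfield). -/
def subPerfectClosure {Ki : Type} [Field Ki] (iK : K →+* Ki) (k : Subfield K) (p : ℕ) :
    Subfield Ki :=
  Subfield.closure {x : Ki | ∃ n : ℕ, ∃ a : K, a ∈ k ∧ x ^ p ^ n = iK a}

variable {K}

lemma subfield_units_map {L : Type} [Field L] (σ : K →+* L) (k : Subfield K)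
    (l : Subfield L) (h : ∀ x ∈ k, σ x ∈ l) :
    ∀ x : Kˣ, x ∈ subfieldUnits K k → Units.map (σ : K →* L) x ∈ subfieldUnits L l :=
  fun x hx => h x hx

lemma mem_subPerfectClosure {Ki : Type} [Field Ki] (iK : K →+* Ki) (k : Subfield K)
    (p : ℕ) : ∀ x ∈ k, iK x ∈ subPerfectClosure K iK k p :=
  fun x hx => Subfield.subset_closure ⟨0, x, hx, by simp⟩

lemma bot_units_map {L : Type} [Field L] (σ : K →+* L) (S : Subgroup Lˣ) :
    ∀ x : Kˣ, x ∈ (⊥ : Subgroup Kˣ) → Units.map (σ : K →* L) x ∈ S := by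
  intro x hx
  rw [Subgroup.mem_bot] at hx
  subst hx
  rw [map_one]
  exact S.one_mem

end FieldTheory

/-!
Forward direction: `I_v` and `D_v` always alternate, so `𝒟 ⊆ C_K(Z_K(𝒟))`. Conversely, let `f`
alternate with `ℐ = I_v ∩ 𝒢_{K|T}` and `u ∈ U_v^1`. Either some `g ∈ ℐ` forces `f(u) = 0` through
the relation at `(1 - u, u)` (possibly after splitting `u = (1 - s)(1 - y)`), or `ℐ` vanishes on the
units of the strictly coarser valuation ring `𝒪_v[(1 - u)⁻¹]`, against the minimality of `v = v_ℐ`.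

Backward direction: put `Z = Z_K(𝒟)`. As `Z` alternates with `𝒟`, every `x ∉ Z^⊥` has a
coefficient `c(x)` with `f(1 - x) = c(x) f(x)` for `f ∈ 𝒟`. Condition (1) gives `f₀, f₁ ∈ 𝒟` that
do not alternate at some `(u, 1 - u)`; then `u, 1 - u ∈ Z^⊥`, and comparing two expansions of
`1 - x u` shows `c(x) ∈ {0, 1}`. The `x ∉ Z^⊥` with `c(x) = 0` behave as the elements of positive
value of a valuation; with the elements of `Z^⊥` that preserve them they form a valuation ring `𝒪`
with `Z ⊆ I_𝒪` and `𝒟 ⊆ D_𝒪`, maximal with the first property, and condition (2) identifies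
`I_𝒪 ∩ 𝒢_{K|T}` with `Z` and `D_𝒪 ∩ 𝒢_{K|T}` with `𝒟`.
-/

section Basics

variable {K : Type} [Field K]

def ev (f : GK K) (x : Kˣ) : ℚ := f (Additive.ofMul x)

@[simp] lemma ev_one (f : GK K) : ev f 1 = 0 := by
  simp [ev]

@[simp] lemma ev_mul (f : GK K) (x y : Kˣ) : ev f (x * y) = ev f x + ev f y := by
  simp [ev, ofMul_mul]

@[simp] lemma ev_inv (f : GK K) (x : Kˣ) : ev f x⁻¹ = -ev f x := by
  simp [ev, ofMul_inv]

@[simp] lemma ev_pow (f : GK K) (x : Kˣ) (n : ℕ) : ev f (x ^ n) = n * ev f x := by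
  simp [ev, ofMul_pow]

-- `ℚ` is torsion-free, so every functional kills the torsion element `-1`.
@[simp] lemma ev_neg_one (f : GK K) : ev f (-1) = 0 := by
  have h : ev f ((-1) ^ 2) = 0 := by simp
  rw [ev_pow] at h
  push_cast at h
  linarith

@[simp] lemma ev_neg (f : GK K) (x : Kˣ) : ev f (-x) = ev f x := by
  rw [← neg_one_mul, ev_mul, ev_neg_one, zero_add]

lemma mem_perpSubgroup_iff {W : Submodule ℚ (GK K)} {x : Kˣ} :
    x ∈ perpSubgroup K W ↔ ∀ g ∈ W, ev g x = 0 := Iff.rfl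

lemma perpSubgroup_anti {Z W : Submodule ℚ (GK K)} (h : Z ≤ W) :
    perpSubgroup K W ≤ perpSubgroup K Z := fun _ hx g hg => hx g (h hg)

lemma neg_one_mem_perpSubgroup (W : Submodule ℚ (GK K)) : (-1 : Kˣ) ∈ perpSubgroup K W :=
  fun g _ => ev_neg_one g

lemma neg_mem_perpSubgroup_iff {W : Submodule ℚ (GK K)} {x : Kˣ} :
    -x ∈ perpSubgroup K W ↔ x ∈ perpSubgroup K W := by
  simp only [mem_perpSubgroup_iff, ev_neg]

lemma exists_ev_ne_zero {W : Submodule ℚ (GK K)} {x : Kˣ} (hx : x ∉ perpSubgroup K W) :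
    ∃ g ∈ W, ev g x ≠ 0 := by
  simpa [mem_perpSubgroup_iff] using hx

/-- The unit `1 - x`, with the junk value `1` at `x = 1`. -/
noncomputable def oneSub (x : Kˣ) : Kˣ :=
  open Classical in
  if h : x = 1 then 1 else Units.mk0 (1 - x) (sub_ne_zero.mpr fun h' => h (Units.ext h'.symm))

lemma coe_oneSub {x : Kˣ} (h : x ≠ 1) : (oneSub x : K) = 1 - x := by
  simp [oneSub, h]

lemma oneSub_ne_one {x : Kˣ} (h : x ≠ 1) : oneSub x ≠ 1 := fun he => by
  have h1 := coe_oneSub h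
  rw [he, Units.val_one] at h1
  exact x.ne_zero (by linear_combination h1)

lemma oneSub_oneSub {x : Kˣ} (h : x ≠ 1) : oneSub (oneSub x) = x :=
  Units.ext (by rw [coe_oneSub (oneSub_ne_one h), coe_oneSub h]; ring)

lemma oneSub_inv {x : Kˣ} (h : x ≠ 1) : oneSub x⁻¹ = -x⁻¹ * oneSub x := by
  have h' : x⁻¹ ≠ 1 := inv_ne_one.mpr h
  refine Units.ext ?_
  push_cast [coe_oneSub h, coe_oneSub h']
  field_simp
  ring

lemma AltPair.symm {f g : GK K} (h : AltPair f g) : AltPair g f :=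
  fun x y hxy => by rw [mul_comm, ← h x y hxy, mul_comm]

lemma altPair_iff {f g : GK K} : AltPair f g ↔
    ∀ x : Kˣ, x ≠ 1 → ev f x * ev g (oneSub x) = ev f (oneSub x) * ev g x := by
  refine ⟨fun h x hx => h x _ (by rw [coe_oneSub hx]; ring), fun h x y hxy => ?_⟩
  have hx : x ≠ 1 := by
    rintro rfl
    simp at hxy
  obtain rfl : y = oneSub x := Units.ext (by rw [coe_oneSub hx]; linear_combination hxy)
  exact h x hx

lemma AltPair.ev_oneSub {f g : GK K} (h : AltPair f g) {t : Kˣ} (ht : t ≠ 1)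
    (hg : ev g t ≠ 0) : ev f (oneSub t) = ev g (oneSub t) / ev g t * ev f t := by
  have := altPair_iff.mp h t ht
  field_simp
  linarith

end Basics

section Valuation

variable {K : Type} [Field K] (A : ValuationSubring K)

lemma mem_unitGroup_iff_mem_and_inv_mem (x : Kˣ) :
    x ∈ A.unitGroup ↔ (x : K) ∈ A ∧ (x : K)⁻¹ ∈ A := by
  rw [A.mem_unitGroup_iff, ← A.valuation_le_one_iff, ← A.valuation_le_one_iff,
    ← Valuation.one_le_val_iff _ x.ne_zero, le_antisymm_iff]

lemma ne_one_of_valuation_lt_one {x : Kˣ} (hx : A.valuation (x : K) < 1) : x ≠ 1 := by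
  rintro rfl
  simp at hx

lemma inv_notMem_of_valuation_lt_one {x : Kˣ} (hx : A.valuation (x : K) < 1) :
    (x : K)⁻¹ ∉ A :=
  (A.mem_nonunits_iff_or.mp (A.mem_nonunits_iff.mpr hx)).resolve_left x.ne_zero

lemma oneSub_mem_principalUnitGroup {x : Kˣ} (hx : A.valuation (x : K) < 1) :
    oneSub x ∈ A.principalUnitGroup := by
  rw [A.mem_principalUnitGroup_iff, coe_oneSub (ne_one_of_valuation_lt_one A hx),
    sub_sub_cancel_left, Valuation.map_neg]
  exact hx

lemma oneSub_mem_unitGroup {x : Kˣ} (hx : A.valuation (x : K) < 1) :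
    oneSub x ∈ A.unitGroup :=
  A.principal_units_le_units (oneSub_mem_principalUnitGroup A hx)

variable {A}

lemma ev_eq_zero_of_mem_Ival {g : GK K} (hg : g ∈ Ival K A) {x : Kˣ} (hx : x ∈ A.unitGroup) :
    ev g x = 0 :=
  hg x hx

lemma ev_eq_zero_of_mem_Dval {f : GK K} (hf : f ∈ Dval K A) {x : Kˣ}
    (hx : x ∈ A.principalUnitGroup) : ev f x = 0 :=
  hf x hx

lemma Ival_le_Dval : Ival K A ≤ Dval K A :=
  fun _ hg x hx => hg x (A.principal_units_le_units hx)

lemma altPair_of_mem_Dval_of_mem_Ival {f g : GK K} (hf : f ∈ Dval K A) (hg : g ∈ Ival K A) :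
    AltPair f g := by
  have hgD : g ∈ Dval K A := Ival_le_Dval hg
  rw [altPair_iff]
  intro x hx
  rcases lt_trichotomy (A.valuation (x : K)) 1 with hv | hv | hv
  · have hP := oneSub_mem_principalUnitGroup A hv
    rw [ev_eq_zero_of_mem_Dval hf hP, ev_eq_zero_of_mem_Dval hgD hP]
    ring
  · rw [ev_eq_zero_of_mem_Ival hg hv]
    have hle : A.valuation (oneSub x : K) ≤ 1 := by
      rw [coe_oneSub hx]
      exact A.valuation.map_sub_le (by simp) hv.le
    rcases hle.lt_or_eq with hlt | heq
    · have hP := oneSub_mem_principalUnitGroup A hlt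
      rw [oneSub_oneSub hx] at hP
      rw [ev_eq_zero_of_mem_Dval hf hP]
      ring
    · rw [ev_eq_zero_of_mem_Ival hg heq]
      ring
  · -- `1 - x = -x (1 - x⁻¹)` with `1 - x⁻¹` a principal unit
    have hv' : A.valuation ((x⁻¹ : Kˣ) : K) < 1 := by
      rw [Units.val_inv_eq_inv_val, map_inv₀]
      exact inv_lt_one_of_one_lt₀ hv
    have key : ∀ h ∈ Dval K A, ev h (oneSub x) = ev h x := by
      intro h hh
      have h0 := ev_eq_zero_of_mem_Dval hh (oneSub_mem_principalUnitGroup A hv')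
      rw [oneSub_inv hx, ev_mul, ev_neg, ev_inv] at h0
      linarith
    rw [key f hf, key g hgD, mul_comm]

variable (A)

def adjoinInv {a : K} (ha : a ∈ A) : ValuationSubring K where
  carrier := {x : K | ∃ n : ℕ, x * a ^ n ∈ A}
  zero_mem' := ⟨0, by simp⟩
  one_mem' := ⟨0, by simp⟩
  add_mem' := by
    rintro x y ⟨n, hx⟩ ⟨m, hy⟩
    refine ⟨n + m, ?_⟩
    rw [show (x + y) * a ^ (n + m) = x * a ^ n * a ^ m + y * a ^ m * a ^ n by ring]
    exact add_mem (mul_mem hx (pow_mem ha m)) (mul_mem hy (pow_mem ha n))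
  mul_mem' := by
    rintro x y ⟨n, hx⟩ ⟨m, hy⟩
    refine ⟨n + m, ?_⟩
    rw [show x * y * a ^ (n + m) = x * a ^ n * (y * a ^ m) by ring]
    exact mul_mem hx hy
  neg_mem' := by
    rintro x ⟨n, hx⟩
    exact ⟨n, by simpa [neg_mul] using hx⟩
  mem_or_inv_mem' x := (A.mem_or_inv_mem x).imp (fun h => ⟨0, by simpa⟩) (fun h => ⟨0, by simpa⟩)

lemma ev_eq_zero_of_pow_le_valuation {g : GK K} (hU : ∀ t ∈ A.unitGroup, ev g t = 0) {a : Kˣ}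
    (ha : ev g a = 0)
    (hs : ∀ s : Kˣ, A.valuation (a : K) < A.valuation (s : K) → A.valuation (s : K) < 1 →
      ev g s = 0) (k : ℕ) :
    ∀ y : Kˣ, A.valuation (a : K) ^ k ≤ A.valuation (y : K) → A.valuation (y : K) ≤ 1 →
      ev g y = 0 := by
  have hva : 0 < A.valuation (a : K) := by simp [zero_lt_iff]
  induction k with
  | zero => exact fun y hk hy => hU y (le_antisymm hy (by simpa using hk))
  | succ k ih =>
    intro y hk hy
    rcases le_or_gt (A.valuation (y : K)) (A.valuation (a : K)) with hya | hay
    · have h := ih (a⁻¹ * y) ?_ ?_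
      · simpa [ha] using h
      · rw [Units.val_mul, Units.val_inv_eq_inv_val, map_mul, map_inv₀, le_inv_mul_iff₀ hva,
          ← pow_succ']
        exact hk
      · rw [Units.val_mul, Units.val_inv_eq_inv_val, map_mul, map_inv₀, inv_mul_le_one₀ hva]
        exact hya
    · rcases hy.lt_or_eq with h1 | h1
      · exact hs y hay h1
      · exact hU y h1

end Valuation

section Forward

variable {K : Type} [Field K] {A : ValuationSubring K}

lemma le_Ival_adjoinInv {I : Submodule ℚ (GK K)} (hI : I ≤ Ival K A) {a : Kˣ} (haA : (a : K) ∈ A)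
    (ha : ∀ g ∈ I, ev g a = 0)
    (hs : ∀ g ∈ I, ∀ s : Kˣ, A.valuation (a : K) < A.valuation (s : K) →
      A.valuation (s : K) < 1 → ev g s = 0) :
    I ≤ Ival K (adjoinInv A haA) := by
  intro g hg x hx
  change ev g x = 0
  obtain ⟨⟨n, hn⟩, ⟨m, hm⟩⟩ := (mem_unitGroup_iff_mem_and_inv_mem _ x).mp hx
  rw [← A.valuation_le_one_iff] at hn hm
  have hx0 : A.valuation (x : K) ≠ 0 := by simp
  have h := ev_eq_zero_of_pow_le_valuation A (hI hg) (ha g hg) (hs g hg) (n + m) (x * a ^ n) ?_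
    (by simpa using hn)
  · simpa [ha g hg] using h
  · calc A.valuation (a : K) ^ (n + m)
        = A.valuation ((x : K) * a ^ n) * A.valuation ((x : K)⁻¹ * a ^ m) := by
          rw [map_mul, map_mul, map_inv₀, mul_mul_mul_comm, mul_inv_cancel₀ hx0, one_mul,
            map_pow, map_pow, pow_add]
      _ ≤ A.valuation ((x * a ^ n : Kˣ) : K) := by
          push_cast
          exact mul_le_of_le_one_right' hm

lemma AltPair.ev_oneSub_eq_zero {f g : GK K} (h : AltPair f g) (hg : g ∈ Ival K A) {t : Kˣ}
    (ht : A.valuation (t : K) < 1) (hgt : ev g t ≠ 0) : ev f (oneSub t) = 0 := by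
  rw [h.ev_oneSub (ne_one_of_valuation_lt_one A ht) hgt,
    ev_eq_zero_of_mem_Ival hg (oneSub_mem_unitGroup A ht)]
  simp

/-- `u = (1 - s)(1 - y)` for `y = (a - s)/(1 - s)`, where `a = 1 - u`; and `y` has the value
of `s`. -/
lemma AltPair.ev_eq_zero_of_valuation_lt {f g : GK K} (h : AltPair f g) (hg : g ∈ Ival K A)
    {u s : Kˣ} (hu1 : u ≠ 1) (has : A.valuation (oneSub u : K) < A.valuation (s : K))
    (hs1 : A.valuation (s : K) < 1) (hgs : ev g s ≠ 0) : ev f u = 0 := by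
  set a := oneSub u
  have hvs1 : A.valuation (1 - (s : K)) = 1 := A.valuation.map_one_sub_of_lt hs1
  have hs1' : (1 : K) - s ≠ 0 := (Valuation.ne_zero_iff A.valuation).mp (by simp [hvs1])
  have hvas : A.valuation ((a : K) - s) = A.valuation (s : K) :=
    Valuation.map_sub_eq_of_lt_right _ has
  have hy0 : ((a : K) - s) / (1 - s) ≠ 0 := by
    refine div_ne_zero (fun h => ?_) hs1'
    rw [h, map_zero] at hvas
    exact (Valuation.ne_zero_iff _).mpr s.ne_zero hvas.symm
  set y : Kˣ := Units.mk0 _ hy0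
  have hvy : A.valuation (y : K) = A.valuation (s : K) := by
    rw [Units.val_mk0, map_div₀, hvas, hvs1, div_one]
  have hgy : ev g y = ev g s := by
    have hU : s⁻¹ * y ∈ A.unitGroup := by
      rw [A.mem_unitGroup_iff, Units.val_mul, map_mul, Units.val_inv_eq_inv_val, map_inv₀,
        hvy, inv_mul_cancel₀ (by simp)]
    simpa using congrArg (· + ev g s) (ev_eq_zero_of_mem_Ival hg hU)
  have hu_eq : u = oneSub s * oneSub y := by
    have hy1 : y ≠ 1 := ne_one_of_valuation_lt_one A (hvy ▸ hs1)
    refine Units.ext ?_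
    rw [Units.val_mul, coe_oneSub (ne_one_of_valuation_lt_one A hs1), coe_oneSub hy1,
      Units.val_mk0, coe_oneSub hu1]
    field_simp
    ring
  rw [hu_eq, ev_mul, h.ev_oneSub_eq_zero hg hs1 hgs,
    h.ev_oneSub_eq_zero hg (hvy ▸ hs1) (hgy ▸ hgs), add_zero]

/-- For `u ∈ U_v^1` and `a = 1 - u`: if some `g ∈ I` is nonzero on `a`, or on an `s` with
`v a < v s < 1`, the pair `(f, g)` kills `u`; otherwise `I` vanishes on the units of the strictly
larger ring `A[a⁻¹]`. -/
theorem mem_Dval_of_forall_altPair {I : Submodule ℚ (GK K)} (hA : IsMinValuationFor K A I)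
    {f : GK K} (hf : ∀ g ∈ I, AltPair f g) : f ∈ Dval K A := by
  intro u hu
  change ev f u = 0
  obtain rfl | hu1 := eq_or_ne u 1
  · exact ev_one f
  set a := oneSub u
  have hva : A.valuation (a : K) < 1 := by
    rw [coe_oneSub hu1, Valuation.map_sub_swap]
    exact (A.mem_principalUnitGroup_iff u).mp hu
  by_cases h1 : ∃ g ∈ I, ev g a ≠ 0
  · obtain ⟨g, hg, hga⟩ := h1
    rw [← oneSub_oneSub hu1]
    exact (hf g hg).ev_oneSub_eq_zero (hA.1 hg) hva hga
  by_cases h2 : ∃ g ∈ I, ∃ s : Kˣ, A.valuation (a : K) < A.valuation (s : K) ∧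
      A.valuation (s : K) < 1 ∧ ev g s ≠ 0
  · obtain ⟨g, hg, s, has, hs1, hgs⟩ := h2
    exact (hf g hg).ev_eq_zero_of_valuation_lt (hA.1 hg) hu1 has hs1 hgs
  push Not at h1 h2
  have haA : (a : K) ∈ A := A.mem_of_valuation_le_one _ hva.le
  have hle := hA.2 _ (le_Ival_adjoinInv hA.1 haA h1 h2)
  exact (inv_notMem_of_valuation_lt_one A hva (hle ⟨1, by simp⟩)).elim

end Forward

section Cofactor

variable {K : Type} [Field K]

/-- The unit `z = x (b - 1) / (1 - x)`, for which `1 - x b = (1 - x)(1 - z)`. -/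
noncomputable def cofactor (x b : Kˣ) : Kˣ := x * -oneSub b * (oneSub x)⁻¹

@[simp] lemma ev_cofactor (f : GK K) (x b : Kˣ) :
    ev f (cofactor x b) = ev f x + ev f (oneSub b) - ev f (oneSub x) := by
  simp only [cofactor, ev_mul, ev_neg, ev_inv]
  ring

lemma oneSub_mul {x b : Kˣ} (hx : x ≠ 1) (hb : b ≠ 1) (hxb : x * b ≠ 1) :
    oneSub (x * b) = oneSub x * oneSub (cofactor x b) := by
  have hx' : (1 : K) - x ≠ 0 := by
    rw [← coe_oneSub hx]
    exact (oneSub x).ne_zero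
  have hcoe : (cofactor x b : K) = x * (b - 1) / (1 - x) := by
    rw [cofactor, Units.val_mul, Units.val_mul, Units.val_neg, Units.val_inv_eq_inv_val,
      coe_oneSub hx, coe_oneSub hb]
    ring
  have hz : cofactor x b ≠ 1 := by
    intro h
    apply hxb
    rw [h, Units.val_one, eq_div_iff hx'] at hcoe
    exact Units.ext (by push_cast; linear_combination -hcoe)
  refine Units.ext ?_
  rw [Units.val_mul, coe_oneSub hxb, coe_oneSub hx, coe_oneSub hz, hcoe, Units.val_mul]
  field_simp
  ring

end Cofactor

/-- The situation of the backward direction, with `Z = Z_K(D)`. -/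
structure CentralPair (K : Type) [Field K] where
  Z : Submodule ℚ (GK K)
  D : Submodule ℚ (GK K)
  le : Z ≤ D
  alt : ∀ g ∈ Z, ∀ f ∈ D, AltPair g f
  u : Kˣ
  u_mem : u ∈ perpSubgroup K Z
  oneSub_u_mem : oneSub u ∈ perpSubgroup K Z
  indep : ∀ a b : ℚ, (∀ f ∈ D, a * ev f u + b * ev f (oneSub u) = 0) → a = 0 ∧ b = 0

namespace CentralPair

variable {K : Type} [Field K] (C : CentralPair K)

abbrev perp : Subgroup Kˣ := perpSubgroup K C.Z

lemma u_ne_one : C.u ≠ 1 := by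
  intro h
  have := (C.indep 1 0 fun f _ => by rw [h]; simp [oneSub]).1
  exact one_ne_zero this

variable {C}

lemma ne_one_of_notMem_perp {x : Kˣ} (hx : x ∉ C.perp) : x ≠ 1 := by
  rintro rfl
  exact hx C.perp.one_mem

lemma notMem_perpD_of_notMem_perp {x : Kˣ} (hx : x ∉ C.perp) : x ∉ perpSubgroup K C.D :=
  fun h => hx (perpSubgroup_anti C.le h)

variable (C)

open Classical in
/-- For `x ∉ Z^⊥`, the rational number `c` with `f (1 - x) = c f x` for all `f ∈ D`. -/
noncomputable def coeff (x : Kˣ) : ℚ :=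
  if h : ∃ g ∈ C.Z, ev g x ≠ 0 then ev h.choose (oneSub x) / ev h.choose x else 0

variable {C}

lemma ev_oneSub {x : Kˣ} (hx : x ∉ C.perp) {f : GK K} (hf : f ∈ C.D) :
    ev f (oneSub x) = C.coeff x * ev f x := by
  have h := exists_ev_ne_zero hx
  rw [coeff, dif_pos h]
  exact (C.alt _ h.choose_spec.1 f hf).symm.ev_oneSub (ne_one_of_notMem_perp hx)
    h.choose_spec.2

lemma coeff_eq_zero_iff {x : Kˣ} (hx : x ∉ C.perp) :
    C.coeff x = 0 ↔ oneSub x ∈ perpSubgroup K C.D := by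
  refine ⟨fun h f hf => ?_, fun h => ?_⟩
  · change ev f (oneSub x) = 0
    rw [ev_oneSub hx hf, h, zero_mul]
  obtain ⟨f, hf, hfx⟩ := exists_ev_ne_zero (notMem_perpD_of_notMem_perp hx)
  have := ev_oneSub hx hf
  rw [show ev f (oneSub x) = 0 from h f hf] at this
  exact (mul_eq_zero.mp this.symm).resolve_right hfx

lemma oneSub_mem_perpD_of_mem_perp {x : Kˣ} (hx : x ∉ C.perp) (h : oneSub x ∈ C.perp) :
    oneSub x ∈ perpSubgroup K C.D := by
  rw [← coeff_eq_zero_iff hx]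
  obtain ⟨g, hg, hgx⟩ := exists_ev_ne_zero hx
  have := ev_oneSub hx (C.le hg)
  rw [show ev g (oneSub x) = 0 from h g hg] at this
  exact (mul_eq_zero.mp this.symm).resolve_right hgx

lemma coeff_inv {x : Kˣ} (hx : x ∉ C.perp) : C.coeff x⁻¹ = 1 - C.coeff x := by
  obtain ⟨f, hf, hfx⟩ := exists_ev_ne_zero (notMem_perpD_of_notMem_perp hx)
  have h := ev_oneSub (inv_mem_iff.not.mpr hx) hf
  rw [oneSub_inv (ne_one_of_notMem_perp hx), ev_mul, ev_neg, ev_inv,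
    ev_oneSub hx hf] at h
  have : (C.coeff x⁻¹ - (1 - C.coeff x)) * ev f x = 0 := by linear_combination h
  exact sub_eq_zero.mp ((mul_eq_zero.mp this).resolve_right hfx)

lemma ev_oneSub_mul {x b : Kˣ} (hx : x ≠ 1) (hb : b ≠ 1) (hxb : x * b ≠ 1)
    (hz : cofactor x b ∉ C.perp) {f : GK K} (hf : f ∈ C.D) :
    ev f (oneSub (x * b)) = ev f (oneSub x) +
      C.coeff (cofactor x b) * (ev f x + ev f (oneSub b) - ev f (oneSub x)) := by
  rw [oneSub_mul hx hb hxb, ev_mul, ev_oneSub hz hf, ev_cofactor]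

/-- Rigidity: comparing the two expansions of `1 - x u` against the independent pair
`(u, 1 - u)` pins the coefficients down. -/
theorem coeff_eq_zero_or_one {x : Kˣ} (hx : x ∉ C.perp) : C.coeff x = 0 ∨ C.coeff x = 1 := by
  refine or_iff_not_imp_right.mpr fun hc1 => ?_
  obtain ⟨g, hgZ, hgx⟩ := exists_ev_ne_zero hx
  have hg0 : ev g C.u = 0 := C.u_mem g hgZ
  have hg1 : ev g (oneSub C.u) = 0 := C.oneSub_u_mem g hgZ
  have hxu : x * C.u ∉ C.perp := (Subgroup.mul_mem_cancel_right _ C.u_mem).not.mpr hx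
  set z := cofactor x C.u
  have hz : z ∉ C.perp := by
    intro hk
    have h : ev g z = 0 := hk g hgZ
    rw [ev_cofactor, hg1, ev_oneSub hx (C.le hgZ)] at h
    have : (1 - C.coeff x) * ev g x = 0 := by linear_combination h
    exact (mul_eq_zero.mp this).elim (fun h => hc1 (by linarith)) hgx
  have expand : ∀ f ∈ C.D, C.coeff (x * C.u) * (ev f x + ev f C.u) =
      C.coeff x * ev f x + C.coeff z * (ev f x + ev f (oneSub C.u) - C.coeff x * ev f x) := by
    intro f hf
    rw [← ev_mul, ← ev_oneSub hxu hf, ev_oneSub_mul (ne_one_of_notMem_perp hx) C.u_ne_one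
      (ne_one_of_notMem_perp hxu) hz hf, ev_oneSub hx hf]
  have hscal : C.coeff (x * C.u) = C.coeff x + C.coeff z * (1 - C.coeff x) := by
    have h := expand g (C.le hgZ)
    rw [hg0, hg1] at h
    have : (C.coeff (x * C.u) - (C.coeff x + C.coeff z * (1 - C.coeff x))) * ev g x = 0 := by
      linear_combination h
    exact sub_eq_zero.mp ((mul_eq_zero.mp this).resolve_right hgx)
  obtain ⟨h1, h2⟩ := C.indep (C.coeff (x * C.u)) (-C.coeff z) fun f hf => by
    linear_combination expand f hf - ev f x * hscal
  rw [h1, neg_eq_zero.mp h2] at hscal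
  linarith

variable (C) in
/-- `x` will be an element of positive value of the valuation attached to `C`. -/
def IsPos (x : Kˣ) : Prop := x ∉ C.perp ∧ oneSub x ∈ perpSubgroup K C.D

lemma IsPos.ne_one {x : Kˣ} (hx : C.IsPos x) : x ≠ 1 := ne_one_of_notMem_perp hx.1

lemma IsPos.oneSub_mem_perp {x : Kˣ} (hx : C.IsPos x) : oneSub x ∈ C.perp :=
  perpSubgroup_anti C.le hx.2

lemma isPos_of_oneSub_mem_perp {x : Kˣ} (hx : x ∉ C.perp) (h : oneSub x ∈ C.perp) :
    C.IsPos x :=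
  ⟨hx, oneSub_mem_perpD_of_mem_perp hx h⟩

lemma isPos_inv_of_coeff_eq_one {x : Kˣ} (hx : x ∉ C.perp) (h : C.coeff x = 1) :
    C.IsPos x⁻¹ := by
  have hx' : x⁻¹ ∉ C.perp := inv_mem_iff.not.mpr hx
  exact ⟨hx', (coeff_eq_zero_iff hx').mp (by rw [coeff_inv hx, h, sub_self])⟩

lemma IsPos.not_isPos_inv {x : Kˣ} (hx : C.IsPos x) : ¬C.IsPos x⁻¹ := fun hx' => by
  have h := coeff_inv hx.1
  rw [(coeff_eq_zero_iff hx.1).mpr hx.2, (coeff_eq_zero_iff hx'.1).mpr hx'.2] at h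
  norm_num at h

lemma isPos_or_isPos_inv {x : Kˣ} (hx : x ∉ C.perp) : C.IsPos x ∨ C.IsPos x⁻¹ :=
  (coeff_eq_zero_or_one hx).imp (fun h => ⟨hx, (coeff_eq_zero_iff hx).mp h⟩)
    (isPos_inv_of_coeff_eq_one hx)

lemma IsPos.mul {x y : Kˣ} (hx : C.IsPos x) (hy : C.IsPos y) (hxy : x * y ∉ C.perp) :
    C.IsPos (x * y) := by
  set z := cofactor x y
  have hzx : ∀ f ∈ C.D, ev f z = ev f x := fun f hf => by
    rw [ev_cofactor, show ev f (oneSub x) = 0 from hx.2 f hf,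
      show ev f (oneSub y) = 0 from hy.2 f hf]
    ring
  have hz : z ∉ C.perp := by
    obtain ⟨g, hg, hgx⟩ := exists_ev_ne_zero hx.1
    exact fun h => hgx (by rw [← hzx g (C.le hg)]; exact h g hg)
  have expand : ∀ f ∈ C.D, C.coeff (x * y) * (ev f x + ev f y) = C.coeff z * ev f x := by
    intro f hf
    rw [← ev_mul, ← ev_oneSub hxy hf, ev_oneSub_mul hx.ne_one hy.ne_one
      (ne_one_of_notMem_perp hxy) hz hf, show ev f (oneSub x) = 0 from hx.2 f hf,
      show ev f (oneSub y) = 0 from hy.2 f hf]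
    ring
  refine ⟨hxy, (coeff_eq_zero_iff hxy).mp ((coeff_eq_zero_or_one hxy).resolve_right ?_)⟩
  intro h1
  rcases coeff_eq_zero_or_one hz with hz0 | hz1
  · refine hxy fun g hg => ?_
    have h := expand g (C.le hg)
    rw [h1, hz0] at h
    change ev g (x * y) = 0
    rw [ev_mul]
    linarith
  · refine notMem_perpD_of_notMem_perp hy.1 fun f hf => ?_
    have h := expand f hf
    rw [h1, hz1] at h
    change ev f y = 0
    linarith

lemma IsPos.neg {x : Kˣ} (hx : C.IsPos x) : C.IsPos (-x) := by
  have hxx : x * x ∉ C.perp := by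
    obtain ⟨g, hg, hgx⟩ := exists_ev_ne_zero hx.1
    intro h
    have : ev g (x * x) = 0 := h g hg
    rw [ev_mul] at this
    exact hgx (by linarith)
  have hxx' := hx.mul hx hxx
  have hnx : -x ≠ 1 := fun h => hx.1 (by rw [← neg_neg x, h]; exact neg_one_mem_perpSubgroup _)
  have hsplit : oneSub (-x) = oneSub (x * x) * (oneSub x)⁻¹ := by
    have h1 : (1 : K) - x ≠ 0 := by
      rw [← coe_oneSub hx.ne_one]
      exact (oneSub x).ne_zero
    refine Units.ext ?_
    rw [Units.val_mul, Units.val_inv_eq_inv_val, coe_oneSub hnx, coe_oneSub hxx'.ne_one,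
      coe_oneSub hx.ne_one, Units.val_neg, Units.val_mul]
    field_simp
    ring
  refine ⟨neg_mem_perpSubgroup_iff.not.mpr hx.1, fun f hf => ?_⟩
  change ev f (oneSub (-x)) = 0
  rw [hsplit, ev_mul, ev_inv, show ev f (oneSub (x * x)) = 0 from hxx'.2 f hf,
    show ev f (oneSub x) = 0 from hx.2 f hf]
  simp

variable (C) in
/-- `h` will be a unit of nonnegative value lying in `Z^⊥`. -/
def IsNonneg (h : Kˣ) : Prop := h ∈ C.perp ∧ ∀ m, C.IsPos m → C.IsPos (h * m)

lemma isNonneg_one : C.IsNonneg 1 := ⟨C.perp.one_mem, fun m hm => by rwa [one_mul]⟩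

lemma IsNonneg.mul {a b : Kˣ} (ha : C.IsNonneg a) (hb : C.IsNonneg b) : C.IsNonneg (a * b) :=
  ⟨mul_mem ha.1 hb.1, fun m hm => by rw [mul_assoc]; exact ha.2 _ (hb.2 m hm)⟩

lemma IsNonneg.neg {a : Kˣ} (ha : C.IsNonneg a) : C.IsNonneg (-a) := by
  have h : C.IsNonneg (-1) :=
    ⟨neg_one_mem_perpSubgroup _, fun m hm => by rw [neg_one_mul]; exact hm.neg⟩
  rw [← neg_one_mul]
  exact h.mul ha

lemma IsPos.isNonneg_mul {x y : Kˣ} (hx : C.IsPos x) (hy : C.IsPos y) (hxy : x * y ∈ C.perp) :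
    C.IsNonneg (x * y) := by
  refine ⟨hxy, fun m hm => ?_⟩
  by_cases hym : y * m ∈ C.perp
  · have hxm : x * m ∉ C.perp := fun hxm => hm.1 fun g hg => by
      have h1 : ev g (x * m) = 0 := hxm g hg
      have h2 : ev g (y * m) = 0 := hym g hg
      have h3 : ev g (x * y) = 0 := hxy g hg
      rw [ev_mul] at h1 h2 h3
      change ev g m = 0
      linarith
    have h := (hx.mul hm hxm).mul hy (by
      rw [mul_right_comm]
      exact (Subgroup.mul_mem_cancel_left _ hxy).not.mpr hm.1)
    rwa [mul_right_comm] at h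
  · have h := hx.mul (hy.mul hm hym) (by
      rw [← mul_assoc]
      exact (Subgroup.mul_mem_cancel_left _ hxy).not.mpr hm.1)
    rwa [← mul_assoc] at h

lemma isNonneg_or_isNonneg_inv {h : Kˣ} (hh : h ∈ C.perp) : C.IsNonneg h ∨ C.IsNonneg h⁻¹ := by
  refine or_iff_not_imp_left.mpr fun hH => ⟨inv_mem hh, fun m hm => ?_⟩
  obtain ⟨m₀, hm₀, hnm⟩ : ∃ m₀, C.IsPos m₀ ∧ ¬C.IsPos (h * m₀) := by
    by_contra hall
    push Not at hall
    exact hH ⟨hh, hall⟩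
  have hhm₀ : h * m₀ ∉ C.perp := (Subgroup.mul_mem_cancel_left _ hh).not.mpr hm₀.1
  have hn₀ : C.IsPos (h * m₀)⁻¹ := ((isPos_or_isPos_inv hhm₀).resolve_left hnm)
  have key : (h * m₀)⁻¹ * (m₀ * m) = h⁻¹ * m := by
    rw [mul_inv_rev, mul_comm m₀⁻¹, mul_assoc, inv_mul_cancel_left]
  by_cases hmm : m₀ * m ∈ C.perp
  · have := (hm₀.isNonneg_mul hm hmm).2 _ hn₀
    rwa [mul_comm, key] at this
  · have := hn₀.mul (hm₀.mul hm hmm) (by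
      rw [key]
      exact (Subgroup.mul_mem_cancel_left _ (inv_mem hh)).not.mpr hm.1)
    rwa [key] at this

lemma oneSub_mem_perp_of_notMem_perpD {h : Kˣ} (hh : h ∈ C.perp)
    (hD : h ∉ perpSubgroup K C.D) : oneSub h ∈ C.perp := by
  obtain ⟨f, hf, hfh⟩ := exists_ev_ne_zero hD
  have h1 : h ≠ 1 := by
    rintro rfl
    exact hD (one_mem _)
  intro g hg
  change ev g (oneSub h) = 0
  rw [(C.alt g hg f hf).ev_oneSub h1 hfh, show ev g h = 0 from hh g hg, mul_zero]

/-- Expanding `1 - m (1 - w)` when `m` and `w` agree on `D` would give the coefficient `1/2`. -/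
lemma IsPos.exists_ev_oneSub_mul_ne {w m : Kˣ} (hw : C.IsPos w) (hm : C.IsPos m)
    (hmw : ∀ f ∈ C.D, ev f m = ev f w) :
    ∃ f ∈ C.D, ev f (oneSub (oneSub w * m)) ≠ ev f m := by
  have hqq : oneSub (oneSub w) = w := oneSub_oneSub hw.ne_one
  have hmq : m * oneSub w ∉ C.perp :=
    (Subgroup.mul_mem_cancel_right _ hw.oneSub_mem_perp).not.mpr hm.1
  have hz : ∀ f ∈ C.D, ev f (cofactor m (oneSub w)) = 2 * ev f m := fun f hf => by
    rw [ev_cofactor, hqq, show ev f (oneSub m) = 0 from hm.2 f hf, hmw f hf]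
    ring
  have hzZ : cofactor m (oneSub w) ∉ C.perp := by
    obtain ⟨g, hg, hgm⟩ := exists_ev_ne_zero hm.1
    refine fun h => hgm ?_
    have : ev g (cofactor m (oneSub w)) = 0 := h g hg
    linarith [hz g (C.le hg)]
  obtain ⟨f, hf, hfm⟩ := exists_ev_ne_zero (notMem_perpD_of_notMem_perp hm.1)
  refine ⟨f, hf, fun h => ?_⟩
  rw [mul_comm, ev_oneSub_mul hm.ne_one (oneSub_ne_one hw.ne_one) (ne_one_of_notMem_perp hmq)
    hzZ hf, ← ev_cofactor, hz f hf, show ev f (oneSub m) = 0 from hm.2 f hf, zero_add] at h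
  have h2 : C.coeff (cofactor m (oneSub w)) * 2 = 1 :=
    mul_right_cancel₀ hfm (by linear_combination h)
  rcases coeff_eq_zero_or_one hzZ with h0 | h0 <;> rw [h0] at h2 <;> norm_num at h2

theorem IsPos.isNonneg_oneSub {w : Kˣ} (hw : C.IsPos w) : C.IsNonneg (oneSub w) := by
  set q := oneSub w
  have hq1 : q ≠ 1 := oneSub_ne_one hw.ne_one
  have hqq : oneSub q = w := oneSub_oneSub hw.ne_one
  have hqD : ∀ f ∈ C.D, ev f q = 0 := hw.2
  refine ⟨hw.oneSub_mem_perp, fun m hm => ?_⟩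
  have hqm : q * m ∉ C.perp := (Subgroup.mul_mem_cancel_left _ hw.oneSub_mem_perp).not.mpr hm.1
  have hz : ∀ f ∈ C.D, ev f (cofactor q m) = -ev f w := fun f hf => by
    rw [ev_cofactor, hqD f hf, show ev f (oneSub m) = 0 from hm.2 f hf, hqq]
    ring
  have hzZ : cofactor q m ∉ C.perp := by
    obtain ⟨g, hg, hgw⟩ := exists_ev_ne_zero hw.1
    refine fun h => hgw ?_
    have : ev g (cofactor q m) = 0 := h g hg
    linarith [hz g (C.le hg)]
  have expand : ∀ f ∈ C.D, ev f (oneSub (q * m)) = (1 - C.coeff (cofactor q m)) * ev f w := by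
    intro f hf
    rw [ev_oneSub_mul hq1 hm.ne_one (ne_one_of_notMem_perp hqm) hzZ hf, ← ev_cofactor,
      hz f hf, hqq]
    ring
  refine ⟨hqm, fun f hf => ?_⟩
  change ev f (oneSub (q * m)) = 0
  rcases coeff_eq_zero_or_one hzZ with h0 | h1
  · -- then `1 - q m` agrees with `w` on `D`, hence so does `m`
    exfalso
    have hc : C.coeff (q * m) = 1 := by
      refine (coeff_eq_zero_or_one hqm).resolve_left fun h0' => ?_
      refine notMem_perpD_of_notMem_perp hw.1 fun f hf => ?_
      have h := expand f hf
      rw [h0, ev_oneSub hqm hf, h0'] at h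
      change ev f w = 0
      linarith
    have hqm_eq : ∀ f ∈ C.D, ev f (oneSub (q * m)) = ev f m := fun f hf => by
      rw [ev_oneSub hqm hf, hc, ev_mul, hqD f hf]
      ring
    obtain ⟨f, hf, hne⟩ := hw.exists_ev_oneSub_mul_ne hm fun f hf => by
      rw [← hqm_eq f hf, expand f hf, h0]
      ring
    exact hne (hqm_eq f hf)
  · rw [expand f hf, h1]
    ring

lemma IsPos.isNonneg_oneSub_inv {w : Kˣ} (hw : C.IsPos w) : C.IsNonneg (oneSub w)⁻¹ := by
  set v := -w * (oneSub w)⁻¹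
  have hv : v ∉ C.perp := by
    refine (Subgroup.mul_mem_cancel_right _ (inv_mem hw.oneSub_mem_perp)).not.mpr ?_
    exact neg_mem_perpSubgroup_iff.not.mpr hw.1
  have hvw : oneSub v = (oneSub w)⁻¹ := by
    have h1 : (1 : K) - w ≠ 0 := by
      rw [← coe_oneSub hw.ne_one]
      exact (oneSub w).ne_zero
    refine Units.ext ?_
    rw [coe_oneSub (ne_one_of_notMem_perp hv), Units.val_inv_eq_inv_val, coe_oneSub hw.ne_one,
      Units.val_mul, Units.val_neg, Units.val_inv_eq_inv_val, coe_oneSub hw.ne_one]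
    field_simp
    ring
  have hvpos : C.IsPos v := ⟨hv, by rw [hvw]; exact inv_mem hw.2⟩
  simpa [hvw] using hvpos.isNonneg_oneSub

theorem IsNonneg.isPos_or_isNonneg_oneSub {h : Kˣ} (hh : C.IsNonneg h) (h1 : h ≠ 1) :
    C.IsPos (oneSub h) ∨ C.IsNonneg (oneSub h) := by
  set q := oneSub h
  have hq1 : q ≠ 1 := oneSub_ne_one h1
  by_cases hq : q ∈ C.perp
  · -- `1 - m q = (1 - m)(1 - z)` with `z = -h (1 - m)⁻¹ m` of positive value
    refine Or.inr ⟨hq, fun m hm => ?_⟩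
    have hmq : m * q ∉ C.perp := (Subgroup.mul_mem_cancel_right _ hq).not.mpr hm.1
    have hz : cofactor m q = (-h * (oneSub m)⁻¹) * m := by
      rw [cofactor, oneSub_oneSub h1, mul_comm m, mul_assoc, mul_comm m, ← mul_assoc]
    have hzpos : C.IsPos (cofactor m q) := by
      rw [hz]
      exact (hh.neg.mul hm.isNonneg_oneSub_inv).2 m hm
    refine ⟨by rwa [mul_comm], ?_⟩
    rw [mul_comm, oneSub_mul hm.ne_one hq1 (ne_one_of_notMem_perp hmq)]
    exact mul_mem hm.2 hzpos.2
  · refine Or.inl ⟨hq, ?_⟩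
    rw [oneSub_oneSub h1]
    by_contra hD
    exact hq (oneSub_mem_perp_of_notMem_perpD hh.1 hD)

variable (C) in
def IsIntegral (x : Kˣ) : Prop := C.IsPos x ∨ C.IsNonneg x

lemma isIntegral_one : C.IsIntegral 1 := Or.inr isNonneg_one

lemma IsIntegral.mul {x y : Kˣ} (hx : C.IsIntegral x) (hy : C.IsIntegral y) :
    C.IsIntegral (x * y) := by
  rcases hx with hx | hx <;> rcases hy with hy | hy
  · by_cases hxy : x * y ∈ C.perp
    · exact Or.inr (hx.isNonneg_mul hy hxy)
    · exact Or.inl (hx.mul hy hxy)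
  · exact Or.inl (by rw [mul_comm]; exact hy.2 x hx)
  · exact Or.inl (hx.2 y hy)
  · exact Or.inr (hx.mul hy)

lemma IsIntegral.neg {x : Kˣ} (hx : C.IsIntegral x) : C.IsIntegral (-x) :=
  hx.imp IsPos.neg IsNonneg.neg

lemma isIntegral_or_isIntegral_inv (x : Kˣ) : C.IsIntegral x ∨ C.IsIntegral x⁻¹ := by
  by_cases hx : x ∈ C.perp
  · exact (isNonneg_or_isNonneg_inv hx).imp Or.inr Or.inr
  · exact (isPos_or_isPos_inv hx).imp Or.inl Or.inl

lemma IsIntegral.oneSub_neg {t : Kˣ} (ht : C.IsIntegral t) (ht1 : -t ≠ 1) :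
    C.IsIntegral (oneSub (-t)) := by
  rcases ht with ht | ht
  · exact Or.inr ht.neg.isNonneg_oneSub
  · exact ht.neg.isPos_or_isNonneg_oneSub ht1

/-- Writing `s = x (1 + x⁻¹ y)`. -/
lemma IsIntegral.add_of_inv_mul {x y s : Kˣ} (hx : C.IsIntegral x)
    (ht : C.IsIntegral (x⁻¹ * y)) (hs : (s : K) = x + y) : C.IsIntegral s := by
  have ht1 : -(x⁻¹ * y) ≠ 1 := by
    intro h
    have h' := congrArg Units.val h
    push_cast at h'
    field_simp at h'
    exact s.ne_zero (by rw [hs]; linear_combination -h')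
  have hs' : s = x * oneSub (-(x⁻¹ * y)) := by
    refine Units.ext ?_
    rw [Units.val_mul, coe_oneSub ht1, hs]
    push_cast
    field_simp
    ring
  rw [hs']
  exact hx.mul (ht.oneSub_neg ht1)

lemma IsIntegral.add {x y s : Kˣ} (hx : C.IsIntegral x) (hy : C.IsIntegral y)
    (hs : (s : K) = x + y) : C.IsIntegral s := by
  rcases isIntegral_or_isIntegral_inv (x⁻¹ * y) with ht | ht
  · exact hx.add_of_inv_mul ht hs
  · rw [mul_inv_rev, inv_inv] at ht
    exact hy.add_of_inv_mul ht (by rw [hs, add_comm])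

variable (C) in
def ring : ValuationSubring K where
  carrier := {a : K | ∀ ha : a ≠ 0, C.IsIntegral (Units.mk0 a ha)}
  zero_mem' := fun h => absurd rfl h
  one_mem' := fun h => by
    rw [show Units.mk0 (1 : K) h = 1 from Units.ext rfl]
    exact isIntegral_one
  add_mem' := by
    intro a b ha hb hab
    rcases eq_or_ne a 0 with rfl | ha0
    · convert hb (by simpa using hab) using 1
      exact Units.ext (zero_add b)
    rcases eq_or_ne b 0 with rfl | hb0
    · convert ha ha0 using 1
      exact Units.ext (add_zero a)
    exact (ha ha0).add (hb hb0) rfl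
  mul_mem' := by
    intro a b ha hb hab
    convert (ha (left_ne_zero_of_mul hab)).mul (hb (right_ne_zero_of_mul hab)) using 1
    exact Units.ext rfl
  neg_mem' := by
    intro a ha hna
    convert (ha (neg_ne_zero.mp hna)).neg using 1
    exact Units.ext rfl
  mem_or_inv_mem' := by
    intro a
    rcases eq_or_ne a 0 with rfl | ha0
    · exact Or.inl fun h => absurd rfl h
    refine (isIntegral_or_isIntegral_inv (Units.mk0 a ha0)).imp (fun h _ => h) (fun h _ => ?_)
    convert h using 1
    exact Units.ext (by simp)

lemma coe_mem_ring_iff {x : Kˣ} : (x : K) ∈ C.ring ↔ C.IsIntegral x :=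
  ⟨fun h => by simpa using h x.ne_zero, fun h _ => by simpa using h⟩

lemma mem_unitGroup_ring_iff {x : Kˣ} :
    x ∈ C.ring.unitGroup ↔ C.IsNonneg x ∧ C.IsNonneg x⁻¹ := by
  rw [mem_unitGroup_iff_mem_and_inv_mem, ← Units.val_inv_eq_inv_val, coe_mem_ring_iff,
    coe_mem_ring_iff]
  refine ⟨fun ⟨hx, hx'⟩ => ?_, fun ⟨hx, hx'⟩ => ⟨Or.inr hx, Or.inr hx'⟩⟩
  rcases hx with hx | hx <;> rcases hx' with hx' | hx'
  · exact absurd hx' hx.not_isPos_inv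
  · exact absurd (inv_mem_iff.mp hx'.1) hx.1
  · exact absurd (inv_mem hx.1) hx'.1
  · exact ⟨hx, hx'⟩

lemma IsNonneg.exists_eq_mul {a : Kˣ} (ha : C.IsNonneg a) (ha' : ¬C.IsIntegral a⁻¹) :
    ∃ m₂ m₁, C.IsPos m₂ ∧ C.IsPos m₁ ∧ a = m₂ * m₁ := by
  obtain ⟨m₁, hm₁, hnm⟩ : ∃ m₁, C.IsPos m₁ ∧ ¬C.IsPos (a⁻¹ * m₁) := by
    by_contra hall
    push Not at hall
    exact ha' (Or.inr ⟨inv_mem ha.1, hall⟩)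
  have hm : a⁻¹ * m₁ ∉ C.perp := (Subgroup.mul_mem_cancel_left _ (inv_mem ha.1)).not.mpr hm₁.1
  refine ⟨_, m₁, (isPos_or_isPos_inv hm).resolve_left hnm, hm₁, ?_⟩
  rw [mul_inv_rev, inv_inv, mul_comm m₁⁻¹, inv_mul_cancel_right]

lemma IsNonneg.oneSub_mem_perp {a : Kˣ} (ha : C.IsNonneg a) (ha' : ¬C.IsIntegral a⁻¹) :
    oneSub a ∈ C.perp := by
  have ha1 : a ≠ 1 := by
    rintro rfl
    exact ha' (by simpa using isIntegral_one)
  by_contra ho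
  rcases isPos_or_isPos_inv ho with hp | hp
  · have := hp.isNonneg_oneSub_inv
    rw [oneSub_oneSub ha1] at this
    exact ha' (Or.inr this)
  · -- `(-(1 - a) a⁻¹) · (-(1 - a)⁻¹) = a⁻¹` would have positive value
    have hn := hp.isNonneg_oneSub_inv
    rw [oneSub_inv (oneSub_ne_one ha1), oneSub_oneSub ha1, mul_inv_rev, inv_neg,
      inv_inv] at hn
    have := hn.2 _ hp.neg
    rw [mul_assoc, neg_mul_neg, mul_inv_cancel, mul_one] at this
    exact this.1 (inv_mem ha.1)

/-- With `a = m₂ m₁`, `1 - a = (1 - m₂)(1 - z)` where `z` has positive value. -/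
theorem IsNonneg.oneSub_mem_perpD {a : Kˣ} (ha : C.IsNonneg a) (ha' : ¬C.IsIntegral a⁻¹) :
    oneSub a ∈ perpSubgroup K C.D := by
  have hoZ := ha.oneSub_mem_perp ha'
  obtain ⟨m₂, m₁, hm₂, hm₁, rfl⟩ := ha.exists_eq_mul ha'
  have hmm : m₂ * m₁ ≠ 1 := by
    rintro h
    exact ha' (by simpa [h] using isIntegral_one)
  have hz : cofactor m₂ m₁ ∉ C.perp := by
    obtain ⟨g, hg, hgm⟩ := exists_ev_ne_zero hm₂.1
    refine fun h => hgm ?_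
    have : ev g (cofactor m₂ m₁) = 0 := h g hg
    rwa [ev_cofactor, show ev g (oneSub m₁) = 0 from hm₁.oneSub_mem_perp g hg,
      show ev g (oneSub m₂) = 0 from hm₂.oneSub_mem_perp g hg, add_zero, sub_zero] at this
  rw [oneSub_mul hm₂.ne_one hm₁.ne_one hmm] at hoZ ⊢
  have hzpos : C.IsPos (cofactor m₂ m₁) := isPos_of_oneSub_mem_perp hz <|
    (Subgroup.mul_mem_cancel_left _ hm₂.oneSub_mem_perp).mp hoZ
  exact mul_mem hm₂.2 hzpos.2

lemma D_le_Dval : C.D ≤ Dval K C.ring := by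
  intro f hf u hu
  change ev f u = 0
  obtain rfl | hu1 := eq_or_ne u 1
  · exact ev_one f
  set a := oneSub u
  have hva : C.ring.valuation (a : K) < 1 := by
    rw [coe_oneSub hu1, Valuation.map_sub_swap]
    exact (C.ring.mem_principalUnitGroup_iff u).mp hu
  rw [← oneSub_oneSub hu1]
  rcases coe_mem_ring_iff.mp (C.ring.mem_of_valuation_le_one _ hva.le) with hp | hn
  · exact hp.2 f hf
  · refine hn.oneSub_mem_perpD (fun h => ?_) f hf
    rw [← coe_mem_ring_iff, Units.val_inv_eq_inv_val] at h
    exact inv_notMem_of_valuation_lt_one C.ring hva h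

lemma Z_le_Ival : C.Z ≤ Ival K C.ring :=
  fun g hg _ hx => (mem_unitGroup_ring_iff.mp hx).1.1 g hg

/-- The elements of positive value lie in the maximal ideal of any `B` with `Z ⊆ I_B`, so the
units of `B` have nonnegative value. -/
theorem le_ring {B : ValuationSubring K} (hB : C.Z ≤ Ival K B) : B ≤ C.ring := by
  have hU : ∀ x ∈ B.unitGroup, x ∈ C.perp := fun x hx g hg => hB hg x hx
  have hpos : ∀ m, C.IsPos m → B.valuation (m : K) < 1 := by
    intro m hm
    by_contra h
    rcases (not_lt.mp h).lt_or_eq with h | h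
    · have hv : B.valuation ((m⁻¹ : Kˣ) : K) < 1 := by
        rw [Units.val_inv_eq_inv_val, map_inv₀]
        exact inv_lt_one_of_one_lt₀ h
      exact hm.not_isPos_inv (isPos_of_oneSub_mem_perp (inv_mem_iff.not.mpr hm.1)
        (hU _ (oneSub_mem_unitGroup B hv)))
    · exact hm.1 (hU m h.symm)
  have hnonneg : ∀ x ∈ B.unitGroup, C.IsNonneg x := by
    refine fun x hx => ⟨hU x hx, fun m hm => isPos_of_oneSub_mem_perp
      ((Subgroup.mul_mem_cancel_left _ (hU x hx)).not.mpr hm.1) (hU _ (oneSub_mem_unitGroup B ?_))⟩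
    rw [Units.val_mul, map_mul, (B.mem_unitGroup_iff x).mp hx, one_mul]
    exact hpos m hm
  rw [← ValuationSubring.unitGroup_le_unitGroup]
  exact fun x hx => mem_unitGroup_ring_iff.mpr ⟨hnonneg x hx, hnonneg _ (inv_mem hx)⟩

lemma isMinValuationFor : IsMinValuationFor K C.ring C.Z :=
  ⟨Z_le_Ival, fun _ => le_ring⟩

lemma Dval_inf_eq {T : Subgroup Kˣ} (hD : C.D ≤ GKrel K T)
    (hmax : RCentralizer K C.Z ⊓ GKrel K T = C.D) : Dval K C.ring ⊓ GKrel K T = C.D := by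
  refine le_antisymm (fun f ⟨hfD, hfT⟩ => ?_) (fun f hf => ⟨D_le_Dval hf, hD hf⟩)
  rw [← hmax]
  exact ⟨fun g hg => altPair_of_mem_Dval_of_mem_Ival hfD (Z_le_Ival hg), hfT⟩

lemma Ival_inf_eq {T : Subgroup Kˣ} (hD : C.D ≤ GKrel K T)
    (hmax : RCentralizer K C.Z ⊓ GKrel K T = C.D) (hZ : C.Z = RCentre K C.D) :
    Ival K C.ring ⊓ GKrel K T = C.Z := by
  refine le_antisymm (fun f ⟨hfI, hfT⟩ => ?_) (fun g hg => ⟨Z_le_Ival hg, hD (C.le hg)⟩)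
  have hfD : f ∈ C.D := by
    rw [← Dval_inf_eq hD hmax]
    exact ⟨Ival_le_Dval hfI, hfT⟩
  rw [hZ]
  exact ⟨hfD, fun f' hf' => (altPair_of_mem_Dval_of_mem_Ival (D_le_Dval hf') hfI).symm⟩

end CentralPair

section Main

variable {K : Type} [Field K]

lemma le_RCentralizer_RCentre (D : Submodule ℚ (GK K)) : D ≤ RCentralizer K (RCentre K D) :=
  fun f hf _ hg => (hg.2 f hf).symm

/-- A pair `f₀, f₁ ∈ D` failing to alternate at `(u, 1 - u)` separates `u` from `1 - u`;
a `g ∈ Z_K(D)` nonzero at `u` or `1 - u` would make them proportional on `D`. -/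
theorem exists_centralPair {D : Submodule ℚ (GK K)} (h : RCentre K D ≠ D) :
    ∃ C : CentralPair K, C.Z = RCentre K D ∧ C.D = D := by
  obtain ⟨f₀, hf₀, f₁, hf₁, hne⟩ : ∃ f₀ ∈ D, ∃ f₁ ∈ D, ¬AltPair f₀ f₁ := by
    by_contra! hall
    exact h (inf_eq_left.mpr hall)
  rw [altPair_iff] at hne
  push Not at hne
  obtain ⟨u, hu1, hdet⟩ := hne
  have indep : ∀ a b : ℚ, (∀ f ∈ D, a * ev f u + b * ev f (oneSub u) = 0) →
      a = 0 ∧ b = 0 := by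
    intro a b hab
    have e0 := hab f₀ hf₀
    have e1 := hab f₁ hf₁
    have hdet' := sub_ne_zero.mpr hdet
    constructor
    · refine (mul_eq_zero.mp ?_).resolve_right hdet'
      linear_combination ev f₁ (oneSub u) * e0 - ev f₀ (oneSub u) * e1
    · refine (mul_eq_zero.mp ?_).resolve_right hdet'
      linear_combination ev f₀ u * e1 - ev f₁ u * e0
  have alt : ∀ g ∈ RCentre K D, ∀ f ∈ D, AltPair g f := fun g hg => hg.2
  have hu : u ∈ perpSubgroup K (RCentre K D) := by
    intro g hg
    by_contra hgu
    have := (indep (ev g (oneSub u) / ev g u) (-1) fun f hf => by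
      rw [(alt g hg f hf).symm.ev_oneSub hu1 hgu]
      ring).2
    norm_num at this
  have hu' : oneSub u ∈ perpSubgroup K (RCentre K D) := by
    intro g hg
    by_contra hgu
    have := (indep 1 (-(ev g u / ev g (oneSub u))) fun f hf => by
      have h := (alt g hg f hf).symm.ev_oneSub (oneSub_ne_one hu1) hgu
      rw [oneSub_oneSub hu1] at h
      rw [h]
      ring).1
    norm_num at this
  exact ⟨⟨RCentre K D, D, inf_le_left, alt, u, hu, hu', indep⟩, rfl, rfl⟩

theorem exists_isVisible {T : Subgroup Kˣ} {D : Submodule ℚ (GK K)} (hsub : D ≤ GKrel K T)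
    (hne : RCentre K D ≠ D) (hmax : RCentralizer K (RCentre K D) ⊓ GKrel K T = D) :
    ∃ A : ValuationSubring K, IsVisible K T A ∧
      RCentre K D = Ival K A ⊓ GKrel K T ∧ D = Dval K A ⊓ GKrel K T := by
  obtain ⟨C, hZ, rfl⟩ := exists_centralPair hne
  rw [← hZ] at hne hmax ⊢
  have hI := C.Ival_inf_eq hsub hmax hZ
  have hD := C.Dval_inf_eq hsub hmax
  refine ⟨C.ring, ⟨?_, ?_, ?_⟩, hI.symm, hD.symm⟩
  · rw [hI, hD, hZ]
  · rwa [hI, hD]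
  · rw [hI]
    exact CentralPair.isMinValuationFor

theorem RCentralizer_RCentre_inf_eq {T : Subgroup Kˣ} {D : Submodule ℚ (GK K)}
    (hsub : D ≤ GKrel K T) {A : ValuationSubring K}
    (hA : IsMinValuationFor K A (Ival K A ⊓ GKrel K T)) (hZ : RCentre K D = Ival K A ⊓ GKrel K T)
    (hD : D = Dval K A ⊓ GKrel K T) : RCentralizer K (RCentre K D) ⊓ GKrel K T = D := by
  refine le_antisymm (fun f ⟨hfC, hfT⟩ => ?_) (fun f hf => ⟨le_RCentralizer_RCentre D hf, hsub hf⟩)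
  rw [hD]
  exact ⟨mem_Dval_of_forall_altPair hA fun g hg => hfC g (hZ ▸ hg), hfT⟩

end Main

theorem detect_visible_valuations_general (K : Type) [Field K] (T : Subgroup Kˣ)
    (D : Submodule ℚ (GK K)) (hsub : D ≤ GKrel K T) :
    (∃ A : ValuationSubring K, IsVisible K T A ∧
        RCentre K D = Ival K A ⊓ GKrel K T ∧ D = Dval K A ⊓ GKrel K T) ↔
      (RCentre K D ≠ D ∧ RCentralizer K (RCentre K D) ⊓ GKrel K T = D) := by
  constructor
  · rintro ⟨A, ⟨-, hne, hA⟩, hZ, hD⟩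
    refine ⟨?_, RCentralizer_RCentre_inf_eq hsub hA hZ hD⟩
    rw [hZ]
    exact fun h => hne (h.trans hD)
  · exact fun ⟨hne, hmax⟩ => exists_isVisible hsub hne hmax

/-- Characterization of the pairs `(I_v ∩ 𝒢_{K|T}, D_v ∩ 𝒢_{K|T})` for
`T`-visible valuations `v` among closed subspaces `𝒟 ⊆ 𝒢_{K|T}`. -/
theorem detect_visible_valuations (K : Type) [Field K] (T : Subgroup Kˣ)
    (D : Submodule ℚ (GK K)) (hD : IsClosedSubspace K D) (hsub : D ≤ GKrel K T) :
    (∃ A : ValuationSubring K, IsVisible K T A ∧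
        RCentre K D = Ival K A ⊓ GKrel K T ∧ D = Dval K A ⊓ GKrel K T) ↔
      (RCentre K D ≠ D ∧ RCentralizer K (RCentre K D) ⊓ GKrel K T = D) :=
  detect_visible_valuations_general K T D hsub

end Paper
end

section
/- Let v be a valuation of K and f, g ∈ D_v. Let f_v and g_v denote the images of f and g in 𝒢_{Kv} under the canonical map D_v → 𝒢_{Kv} (induced via Kv^× ⊆ K^×/U_v^1). Then ℛ_K(f,g) holds if and only if ℛ_{Kv}(f_v, g_v) holds. -/
/- Common definitions: Milnor K-theory of fields (possibly modulo a subgroup of `Kˣ`),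
its rationalization, the dual space `𝒢_K` with the relation of alternating pairs,
and valuation-theoretic subspaces, following the paper. -/

set_option synthInstance.maxHeartbeats 400000
set_option maxHeartbeats 1000000

open scoped TensorProduct

namespace Paper

section Aux

lemma eval_neg_one {K : Type} [Field K] (f : GK K) : f (Additive.ofMul (-1 : Kˣ)) = 0 := by
  have h : Additive.ofMul ((-1 : Kˣ) * (-1)) = Additive.ofMul (-1 : Kˣ) + Additive.ofMul (-1) :=
    ofMul_mul _ _
  rw [show ((-1 : Kˣ) * (-1)) = 1 by simp, ofMul_one] at h
  have h2 := congrArg f h.symm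
  rw [map_add, map_zero] at h2
  linarith

lemma eval_congr_principal {K : Type} [Field K] (A : ValuationSubring K) (f : GK K)
    (hf : f ∈ Dval K A) {a b : Kˣ} (h : a * b⁻¹ ∈ A.principalUnitGroup) :
    f (Additive.ofMul a) = f (Additive.ofMul b) := by
  have hf' : ∀ x ∈ A.principalUnitGroup, f (Additive.ofMul x) = 0 := hf
  have h0 := hf' _ h
  rw [ofMul_mul, ofMul_inv, map_add, map_neg] at h0
  linarith

lemma eval_eq_of_one_lt {K : Type} [Field K] (A : ValuationSubring K) (f : GK K)
    (hf : f ∈ Dval K A) {a b : Kˣ} (hab : (a : K) + (b : K) = 1)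
    (hb : 1 < A.valuation (b : K)) :
    f (Additive.ofMul a) = f (Additive.ofMul b) := by
  have hmem : a * (-b)⁻¹ ∈ A.principalUnitGroup := by
    rw [ValuationSubring.mem_principalUnitGroup_iff]
    have hbne : (b : K) ≠ 0 := Units.ne_zero b
    have ha : (a : K) = 1 - (b : K) := eq_sub_of_add_eq hab
    have key : ((a * (-b)⁻¹ : Kˣ) : K) - 1 = -((b : K)⁻¹) := by
      push_cast
      rw [ha]
      field_simp
      ring
    rw [key, Valuation.map_neg, map_inv₀]
    have hpos : (0 : A.ValueGroup) < A.valuation (b : K) := by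
      rw [zero_lt_iff]
      exact (Valuation.ne_zero_iff _).mpr hbne
    exact (inv_lt_one₀ hpos).mpr hb
  have h1 := eval_congr_principal A f hf hmem
  have h2 : f (Additive.ofMul (-b)) = f (Additive.ofMul b) := by
    rw [show (-b : Kˣ) = (-1) * b by simp, ofMul_mul, map_add, eval_neg_one, zero_add]
  rw [h1, h2]

end Aux

/-- For `f, g ∈ D_v`, the relation `ℛ_K(f,g)` holds iff `ℛ_{Kv}(f_v,g_v)`
holds, where `f_v, g_v` are the maps induced on the residue field (characterized by
evaluating `f`, `g` on unit lifts). -/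

theorem altPair_iff_residue_altPair (K : Type) [Field K] (A : ValuationSubring K)
    (f g : GK K) (hf : f ∈ Dval K A) (hg : g ∈ Dval K A)
    (fv gv : GK (IsLocalRing.ResidueField A))
    (hfv : ∀ u : A.unitGroup,
      fv (Additive.ofMul (A.unitGroupToResidueFieldUnits u)) = f (Additive.ofMul (u : Kˣ)))
    (hgv : ∀ u : A.unitGroup,
      gv (Additive.ofMul (A.unitGroupToResidueFieldUnits u)) = g (Additive.ofMul (u : Kˣ))) :
    AltPair f g ↔ AltPair fv gv := by
  constructor
  · intro hAlt ξ η hsum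
    obtain ⟨u, hu⟩ := A.surjective_unitGroupToResidueFieldUnits ξ
    set a : Aˣ := A.unitGroupMulEquiv u with ha
    set b : A := 1 - (a : A) with hbdef
    have hcoe : Ideal.Quotient.mk (IsLocalRing.maximalIdeal A) (a : A) =
        ((ξ : (IsLocalRing.ResidueField A)ˣ) : IsLocalRing.ResidueField A) := by
      rw [← hu, A.coe_unitGroupToResidueFieldUnits_apply]
    have hres : Ideal.Quotient.mk (IsLocalRing.maximalIdeal A) b =
        ((η : (IsLocalRing.ResidueField A)ˣ) : IsLocalRing.ResidueField A) := by
      rw [hbdef, map_sub, map_one, hcoe]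
      exact (eq_sub_of_add_eq' hsum).symm
    have hbunit : IsUnit b := by
      by_contra hnb
      have hmem : b ∈ IsLocalRing.maximalIdeal A := hnb
      have : Ideal.Quotient.mk (IsLocalRing.maximalIdeal A) b = 0 :=
        Ideal.Quotient.eq_zero_iff_mem.mpr hmem
      rw [hres] at this
      exact Units.ne_zero η this
    set w : A.unitGroup := A.unitGroupMulEquiv.symm hbunit.unit with hwdef
    have hw : A.unitGroupToResidueFieldUnits w = η := by
      apply Units.ext
      rw [A.coe_unitGroupToResidueFieldUnits_apply, hwdef, MulEquiv.apply_symm_apply,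
        IsUnit.unit_spec]
      exact hres
    have hsum' : ((u : Kˣ) : K) + ((w : Kˣ) : K) = 1 := by
      have h1 : ((w : Kˣ) : K) = ((b : A) : K) := by
        rw [hwdef, A.coe_unitGroupMulEquiv_symm_apply, IsUnit.unit_spec]
      have h2 : ((u : Kˣ) : K) = ((a : A) : K) := (A.coe_unitGroupMulEquiv_apply u).symm
      rw [h1, h2, hbdef]
      push_cast
      ring
    have key := hAlt (u : Kˣ) (w : Kˣ) hsum'
    rw [← hu, ← hw, hfv, hfv, hgv, hgv]
    exact key
  · intro hAlt x y hxy
    rcases lt_trichotomy (A.valuation (x : K)) 1 with hx | hx | hx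
    · have hy : y ∈ A.principalUnitGroup := by
        rw [ValuationSubring.mem_principalUnitGroup_iff]
        have h1 : ((y : K)) - 1 = -(x : K) := by linear_combination hxy
        rw [h1, Valuation.map_neg]
        exact hx
      have hf' : ∀ z ∈ A.principalUnitGroup, f (Additive.ofMul z) = 0 := hf
      have hg' : ∀ z ∈ A.principalUnitGroup, g (Additive.ofMul z) = 0 := hg
      rw [hf' y hy, hg' y hy, mul_zero, zero_mul]
    · rcases lt_trichotomy (A.valuation (y : K)) 1 with hy | hy | hy
      · have hx' : x ∈ A.principalUnitGroup := by
          rw [ValuationSubring.mem_principalUnitGroup_iff]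
          have h1 : ((x : K)) - 1 = -(y : K) := by linear_combination hxy
          rw [h1, Valuation.map_neg]
          exact hy
        have hf' : ∀ z ∈ A.principalUnitGroup, f (Additive.ofMul z) = 0 := hf
        have hg' : ∀ z ∈ A.principalUnitGroup, g (Additive.ofMul z) = 0 := hg
        rw [hf' x hx', hg' x hx', mul_zero, zero_mul]
      · -- both units
        set u : A.unitGroup := ⟨x, hx⟩ with hudef
        set w : A.unitGroup := ⟨y, hy⟩ with hwdef
        have hsumres :
            ((A.unitGroupToResidueFieldUnits u : (IsLocalRing.ResidueField A)ˣ) :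
                IsLocalRing.ResidueField A) +
              ((A.unitGroupToResidueFieldUnits w : (IsLocalRing.ResidueField A)ˣ) :
                IsLocalRing.ResidueField A) = 1 := by
          rw [A.coe_unitGroupToResidueFieldUnits_apply, A.coe_unitGroupToResidueFieldUnits_apply]
          refine (map_add (Ideal.Quotient.mk (IsLocalRing.maximalIdeal A)) _ _).symm.trans
            (Eq.trans ?_ (map_one (Ideal.Quotient.mk (IsLocalRing.maximalIdeal A))))
          congr 1
          apply Subtype.ext
          push_cast [A.coe_unitGroupMulEquiv_apply]
          exact hxy
        have key := hAlt (A.unitGroupToResidueFieldUnits u) (A.unitGroupToResidueFieldUnits w)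
          hsumres
        rw [hfv, hfv, hgv, hgv] at key
        exact key
      · rw [eval_eq_of_one_lt A f hf hxy hy, eval_eq_of_one_lt A g hg hxy hy]
    · have hyx : (y : K) + (x : K) = 1 := by linear_combination hxy
      rw [eval_eq_of_one_lt A f hf hyx hx, eval_eq_of_one_lt A g hg hyx hx]

end Paper
end
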